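/- Let λ : Fˣ → kˣ be a nontrivial group homomorphism, let n ≥ 1, and let u₁, …, u_n ∈ Fˣ be pairwise distinct. Then the set of tuples x = (x₁, …, x_n) ∈ (Fˣ)ⁿ such that xᵢ + uⱼ ≠ 0 for all i, j and the n×n matrix whose (i,j) entry is λ(xᵢ + uⱼ) has nonzero determinant, is infinite. -/

import Mathlib

open Matrix MonoidAlgebra
open scoped Classical

noncomputable section

variable (p : ℕ) [Fact p.Prime]

abbrev Fbar : Type := AlgebraicClosure (ZMod p)
abbrev SL2 : Type := Matrix.SpecialLinearGroup (Fin 2) (Fbar p)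

def Tgrp : Subgroup (SL2 p) where
  carrier := {g | g.1 0 1 = 0 ∧ g.1 1 0 = 0}
  one_mem' := by simp
  mul_mem' := by
    rintro a b ⟨ha1, ha2⟩ ⟨hb1, hb2⟩
    constructor <;>
      simp [Matrix.mul_apply, Fin.sum_univ_succ, ha1, ha2, hb1, hb2]
  inv_mem' := by
    rintro a ⟨ha1, ha2⟩
    constructor <;>
      simp [Matrix.SpecialLinearGroup.coe_inv, Matrix.adjugate_fin_two, ha1, ha2]

def Ugrp : Subgroup (SL2 p) where
  carrier := {g | g.1 1 0 = 0 ∧ g.1 0 0 = 1 ∧ g.1 1 1 = 1}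
  one_mem' := by simp
  mul_mem' := by
    rintro a b ⟨ha1, ha2, ha3⟩ ⟨hb1, hb2, hb3⟩
    refine ⟨?_, ?_, ?_⟩ <;>
      simp [Matrix.mul_apply, Fin.sum_univ_succ, ha1, ha2, ha3, hb1, hb2, hb3]
  inv_mem' := by
    rintro a ⟨ha1, ha2, ha3⟩
    refine ⟨?_, ?_, ?_⟩ <;>
      simp [Matrix.SpecialLinearGroup.coe_inv, Matrix.adjugate_fin_two, ha1, ha2, ha3]

def Bgrp : Subgroup (SL2 p) where
  carrier := {g | g.1 1 0 = 0}
  one_mem' := by simp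
  mul_mem' := by
    intro a b ha hb
    simp only [Set.mem_setOf_eq] at *
    simp [Matrix.mul_apply, Fin.sum_univ_succ, ha, hb]
  inv_mem' := by
    intro a ha
    simp only [Set.mem_setOf_eq] at *
    simp [Matrix.SpecialLinearGroup.coe_inv, Matrix.adjugate_fin_two, ha]

def Ngrp : Subgroup (SL2 p) := Subgroup.normalizer ((Tgrp p : Set (SL2 p)))

def eps (x : Fbar p) : SL2 p :=
  ⟨!![1, x; 0, 1], by simp [Matrix.det_fin_two_of]⟩

def sdot : SL2 p :=
  ⟨!![0, 1; -1, 0], by simp [Matrix.det_fin_two_of]⟩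

lemma mem_Tgrp_iff {g : SL2 p} : g ∈ Tgrp p ↔ g.1 0 1 = 0 ∧ g.1 1 0 = 0 := Iff.rfl
lemma mem_Bgrp_iff {g : SL2 p} : g ∈ Bgrp p ↔ g.1 1 0 = 0 := Iff.rfl

/-- The projection `B → T` killing the unipotent radical `U`,
sending an upper triangular matrix to its diagonal part. -/
def diagHom : Bgrp p →* Tgrp p where
  toFun b :=
    ⟨⟨!![b.1.1 0 0, 0; 0, b.1.1 1 1], by
        have hd : b.1.1.det = 1 := b.1.2
        rw [Matrix.det_fin_two] at hd
        have h10 : b.1.1 1 0 = 0 := b.2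
        rw [h10, mul_zero, sub_zero] at hd
        simpa [Matrix.det_fin_two_of] using hd⟩,
     by constructor <;> simp⟩
  map_one' := by
    apply Subtype.ext
    apply Subtype.ext
    simp [Matrix.one_fin_two]
  map_mul' := by
    intro a b
    apply Subtype.ext
    apply Subtype.ext
    have ha : a.1.1 1 0 = 0 := a.2
    have hb : b.1.1 1 0 = 0 := b.2
    show !![((a * b : Bgrp p) : SL2 p).1 0 0, 0; 0, ((a * b : Bgrp p) : SL2 p).1 1 1] =
      !![a.1.1 0 0, 0; 0, a.1.1 1 1] * !![b.1.1 0 0, 0; 0, b.1.1 1 1]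
    ext i j
    fin_cases i <;> fin_cases j <;>
      simp [Matrix.SpecialLinearGroup.coe_mul, Matrix.mul_apply, Fin.sum_univ_succ, ha, hb]

/-- Conjugation by `ṡ` as an automorphism of `T`:  `t ↦ ṡ⁻¹ t ṡ`. -/
def sConj : Tgrp p →* Tgrp p where
  toFun t :=
    ⟨(sdot p)⁻¹ * (t : SL2 p) * sdot p, by
      have h1 : (t : SL2 p).1 0 1 = 0 := t.2.1
      have h2 : (t : SL2 p).1 1 0 = 0 := t.2.2
      show (Matrix.adjugate (sdot p).1 * (t : SL2 p).1 * (sdot p).1) 0 1 = 0 ∧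
        (Matrix.adjugate (sdot p).1 * (t : SL2 p).1 * (sdot p).1) 1 0 = 0
      constructor <;>
        simp [sdot, Matrix.SpecialLinearGroup.coe_inv, Matrix.adjugate_fin_two,
          Matrix.mul_apply, Matrix.vecMul, dotProduct, Fin.sum_univ_succ, h1, h2]⟩
  map_one' := by
    apply Subtype.ext
    simp
  map_mul' := by
    intro a b
    apply Subtype.ext
    simp only [Subgroup.coe_mul]
    group

variable (k : Type*) [Field k] [IsAlgClosed k] [CharZero k]

/-- The group algebra `kG`. -/
abbrev GA := MonoidAlgebra k (SL2 p)

/-- The submodule of relations defining `kG ⊗_{kH} k_χ`. -/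
def indRel (H : Subgroup (SL2 p)) (χ : H → k) : Submodule (GA p k) (GA p k) :=
  Submodule.span (GA p k)
    {x | ∃ (g : SL2 p) (h : H),
      x = MonoidAlgebra.single (g * (h : SL2 p)) 1 - χ h • MonoidAlgebra.single g 1}

/-- The induced module `kG ⊗_{kH} k_χ`, realized as a quotient of `kG`. -/
abbrev IndMod (H : Subgroup (SL2 p)) (χ : H → k) : Type _ := GA p k ⧸ indRel p k H χ

/-- The canonical image of `g ⊗ 1` in `kG ⊗_{kH} k_χ`. -/
def indMk (H : Subgroup (SL2 p)) (χ : H → k) (g : SL2 p) : IndMod p k H χ :=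
  Submodule.Quotient.mk (MonoidAlgebra.single g 1)

/-- The character value function `B → k` attached to a character `θ` of `T`,
via the projection `B → T`. -/
def charB (θ : Tgrp p →* kˣ) : Bgrp p → k := fun b => θ (diagHom p b)

/-- `M(θ) = kG ⊗_{kB} k_θ`. -/
abbrev Mθ (θ : Tgrp p →* kˣ) : Type _ := IndMod p k (Bgrp p) (charB p k θ)

/-- The trivial `kG`-module `k_tr`. -/
abbrev Ktriv : Type _ := (Representation.trivial k (G := SL2 p) (V := k)).asModule

/-- The permutation module `k[G/H]`. -/
abbrev PermMod (H : Subgroup (SL2 p)) : Type _ :=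
  (Representation.ofMulAction k (SL2 p) (SL2 p ⧸ H)).asModule

/-- The augmentation (sum of coefficients) on `k[G/H]`. -/
def aug (H : Subgroup (SL2 p)) (ξ : PermMod p k H) : k :=
  ((Representation.ofMulAction k (SL2 p) (SL2 p ⧸ H)).asModuleEquiv ξ).coeff.sum fun _ c => c


/-- Extension of a homomorphism `λ : Fˣ → kˣ` to `F`, by `0` at `0`. -/
def lamExt (lam : (Fbar p)ˣ →* kˣ) : Fbar p → k := fun y =>
  if h : y = 0 then 0 else (lam (Units.mk0 y h) : k)

/-!
Extending `λ` by `0` gives a multiplicative character `χ` of `F`. Expanding the determinant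
along its last row, an induction on `n` reduces everything to: if `C ≠ 0` and the `uⱼ` are
distinct, then `g y = ∑ⱼ Cⱼ χ (y + uⱼ)` is nonzero for infinitely many `y`.

Suppose `g` had finite support. Pair `g` with `y ↦ χ⁻¹ (y + u_{i₀})` over a finite subfield
`K ⊆ F` containing the support, the `uⱼ` and a witness of `χ ≠ 1`. The orthogonality relation
`∑_{z ∈ K} χ (z + c) χ⁻¹ z = q [c = 0] - 1`, with `q = |K|`, evaluates the pairing to
`q C_{i₀} - ∑ⱼ Cⱼ`, while the pairing itself only sees the support of `g`, so it does not
depend on `K`. As `F` is a union of finite fields of unbounded size and `k` has characteristic zero,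
this forces `C_{i₀} = 0`.
-/

open Finset

theorem IntermediateField.exists_finite_superset_card_gt (K₀ : Type*) {F : Type*} [Field K₀]
    [Finite K₀] [Field F] [Infinite F] [Algebra K₀ F] [Algebra.IsAlgebraic K₀ F]
    (s : Finset F) (N : ℕ) :
    ∃ K : IntermediateField K₀ F, Finite K ∧ (s : Set F) ⊆ K ∧ N < Nat.card K := by
  obtain ⟨t, hst, ht⟩ :=
    Infinite.exists_superset_card_eq s (max s.card (N + 1)) (le_max_left _ _)
  have : FiniteDimensional K₀ (adjoin K₀ (t : Set F)) :=
    finiteDimensional_adjoin fun x _ => Algebra.IsIntegral.isIntegral x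
  have : Finite (adjoin K₀ (t : Set F)) := Module.finite_of_finite K₀
  refine ⟨adjoin K₀ t, this, (coe_subset.2 hst).trans (subset_adjoin K₀ _), ?_⟩
  calc N < t.card := by omega
    _ = Nat.card (t : Set F) := ((Nat.card_coe_set_eq _).trans (Set.ncard_coe_finset t)).symm
    _ ≤ Nat.card (adjoin K₀ (t : Set F)) :=
      Nat.card_mono (Set.toFinite _) (subset_adjoin K₀ _)

theorem Matrix.det_of_snoc {R α : Type*} [CommRing R] {m : ℕ} (e : α → Fin (m + 1) → R)
    (x : Fin m → α) (y : α) :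
    (of fun i j => e (Fin.snoc (α := fun _ => α) x y i) j).det =
      ∑ j : Fin (m + 1),
        (-1) ^ (m + j : ℕ) * (of fun i j' => e (x i) (j.succAbove j')).det * e y j := by
  rw [det_succ_row _ (Fin.last m)]
  refine sum_congr rfl fun j _ => ?_
  simp only [of_apply, Fin.snoc_last, Fin.val_last]
  rw [mul_right_comm]
  congr 3
  ext i j'
  simp [Fin.succAbove_last]

namespace MulChar

section comap

variable {F R : Type*} [Field F] [CommRing R] {K : Type*} [Field K]

def comap (f : K →+* F) (χ : MulChar F R) : MulChar K R where
  toFun x := χ (f x)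
  map_one' := by simp
  map_mul' x y := by simp
  map_nonunit' x hx := by
    rw [isUnit_iff_ne_zero, not_not] at hx
    rw [hx, map_zero, χ.map_zero]

variable (f : K →+* F) (χ : MulChar F R)

@[simp]
theorem comap_apply (x : K) : χ.comap f x = χ (f x) := rfl

theorem comap_inv : (χ.comap f)⁻¹ = χ⁻¹.comap f := by
  ext x
  simp [inv_apply', map_inv₀]

theorem comap_ne_one {w : K} (hw₀ : w ≠ 0) (hw : χ (f w) ≠ 1) : χ.comap f ≠ 1 := fun h =>
  hw <| by simpa [← comap_apply, h] using one_apply_coe (R' := R) (Units.mk0 w hw₀)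

end comap

section FiniteField

variable {K R : Type*} [Field K] [Fintype K] [CommRing R] [IsDomain R]
  (χ : MulChar K R)

theorem sum_shift_mul_inv (hχ : χ ≠ 1) (c : K) :
    ∑ z, χ (z + c) * χ⁻¹ z = (if c = 0 then (Fintype.card K : R) else 0) - 1 := by
  have hterm z : χ (z + c) * χ⁻¹ z = χ (1 + c * z⁻¹) - if z = 0 then 1 else 0 := by
    rcases eq_or_ne z 0 with rfl | hz
    · simp
    · rw [inv_apply', ← map_mul, add_mul, mul_inv_cancel₀ hz, if_neg hz, sub_zero, add_comm]
  simp_rw [hterm]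
  rw [sum_sub_distrib, sum_ite_eq' univ (0 : K), if_pos (mem_univ _),
    Fintype.sum_equiv (Equiv.inv K) (fun z => χ (1 + c * z⁻¹)) (fun w => χ (1 + c * w))
      fun _ => rfl]
  congr 1
  split_ifs with hc
  · simp [hc]
  · rw [Fintype.sum_equiv ((Equiv.mulLeft₀ c hc).trans (Equiv.addLeft 1))
      (fun w => χ (1 + c * w)) χ fun _ => rfl]
    exact sum_eq_zero_of_ne_one hχ

theorem sum_linearCombination_shift_mul_inv (hχ : χ ≠ 1) {ι : Type*} [Fintype ι]
    {u : ι → K} (hu : Function.Injective u) (C : ι → R) (i₀ : ι) :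
    ∑ x, (∑ j, C j * χ (x + u j)) * χ⁻¹ (x + u i₀) =
      Fintype.card K * C i₀ - ∑ j, C j := by
  rw [← Fintype.sum_equiv (Equiv.subRight (u i₀))
    (fun z => (∑ j, C j * χ (z - u i₀ + u j)) * χ⁻¹ z) _ fun z => by simp]
  simp_rw [sum_mul, mul_assoc]
  rw [sum_comm]
  simp_rw [← mul_sum, sub_add_eq_add_sub, add_sub_assoc, sum_shift_mul_inv χ hχ, sub_eq_zero,
    hu.eq_iff]
  simp [mul_sub, sum_sub_distrib, mul_comm]

end FiniteField

theorem infinite_setOf_sum_mul_shift_ne_zero (K₀ : Type*) {F R : Type*} [Field K₀] [Finite K₀]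
    [Field F] [Infinite F] [Algebra K₀ F] [Algebra.IsAlgebraic K₀ F] [CommRing R] [IsDomain R]
    [CharZero R] {χ : MulChar F R} (hχ : χ ≠ 1) {ι : Type*} [Fintype ι] {u : ι → F}
    (hu : Function.Injective u) {C : ι → R} (hC : C ≠ 0) :
    {y | ∑ j, C j * χ (y + u j) ≠ 0}.Infinite := by
  obtain ⟨i₀, hi₀⟩ := Function.ne_iff.1 hC
  obtain ⟨w, hw⟩ := ne_one_iff.1 hχ
  intro hfin
  set g : F → R := fun y => ∑ j, C j * χ (y + u j)
  set S := hfin.toFinset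
  set T : Finset F := S ∪ univ.image u ∪ {(w : F)}
  have pairing (K : IntermediateField K₀ F) [Finite K] (hK : (T : Set F) ⊆ K) :
      (Nat.card K : R) * C i₀ - ∑ j, C j = ∑ z ∈ S, g z * χ⁻¹ (z + u i₀) := by
    have := Fintype.ofFinite K
    simp only [T, coe_union, coe_image, coe_univ, Set.image_univ, coe_singleton,
      Set.union_subset_iff, Set.singleton_subset_iff, Set.range_subset_iff] at hK
    obtain ⟨⟨hSK, huK⟩, hwK⟩ := hK
    have hχK : χ.comap K.val.toRingHom ≠ 1 :=
      comap_ne_one _ χ (w := ⟨w, hwK⟩) (fun h => w.ne_zero congr($h.1)) hw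
    rw [Nat.card_eq_fintype_card, ← sum_linearCombination_shift_mul_inv _ hχK
      (u := fun j => ⟨u j, huK j⟩) (fun _ _ h => hu congr($h.1)), comap_inv]
    change ∑ x : K, g x * χ⁻¹ (x + u i₀) = _
    refine (sum_map univ (Function.Embedding.subtype (· ∈ K))
      fun z => g z * χ⁻¹ (z + u i₀)).symm.trans
      (sum_subset (fun z hz => ?_) fun z _ hz => ?_).symm
    · simpa using hSK hz
    · simp_all [S, g]
  obtain ⟨K₁, hK₁, hsub₁, -⟩ := IntermediateField.exists_finite_superset_card_gt K₀ T 0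
  obtain ⟨K₂, hK₂, hsub₂, hcard⟩ :=
    IntermediateField.exists_finite_superset_card_gt K₀ T (Nat.card K₁)
  have := (pairing K₁ hsub₁).trans (pairing K₂ hsub₂).symm
  exact hcard.ne (by exact_mod_cast mul_right_cancel₀ hi₀ (sub_left_inj.1 this))

theorem exists_det_shift_ne_zero (K₀ : Type*) {F R : Type*} [Field K₀] [Finite K₀]
    [Field F] [Infinite F] [Algebra K₀ F] [Algebra.IsAlgebraic K₀ F] [CommRing R] [IsDomain R]
    [CharZero R] {χ : MulChar F R} (hχ : χ ≠ 1) {m : ℕ} {u : Fin m → F}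
    (hu : Function.Injective u) {Ω : Set F} (hΩ : Ω.Finite) :
    ∃ x : Fin m → F, (∀ i, x i ∉ Ω) ∧ (of fun i j => χ (x i + u j)).det ≠ 0 := by
  induction m with
  | zero => exact ⟨finZeroElim, finZeroElim, by simp⟩
  | succ m ih =>
    obtain ⟨x, hxΩ, hx⟩ := ih (hu.comp (Fin.castSucc_injective m))
    set C : Fin (m + 1) → R :=
      fun j => (-1) ^ (m + j : ℕ) * (of fun i j' => χ (x i + u (j.succAbove j'))).det
    have hC : C ≠ 0 := fun h => hx <| by
      simpa [C, Fin.succAbove_last] using congr_fun h (Fin.last m)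
    obtain ⟨y, hy, hyΩ⟩ :=
      ((infinite_setOf_sum_mul_shift_ne_zero K₀ hχ hu hC).sdiff hΩ).nonempty
    refine ⟨Fin.snoc x y, Fin.lastCases (by simpa using hyΩ) fun i => by simpa using hxΩ i,
      ?_⟩
    rw [det_of_snoc fun a j => χ (a + u j)]
    exact hy

end MulChar

/-- For a nontrivial homomorphism `λ : Fˣ → kˣ`, `n ≥ 1` and pairwise distinct
`u₁, …, u_n ∈ Fˣ`, there are infinitely many `x ∈ (Fˣ)ⁿ` such that all `xᵢ + uⱼ ≠ 0` and
`det (λ(xᵢ + uⱼ))_{i,j} ≠ 0`. -/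
theorem statement3 (lam : (Fbar p)ˣ →* kˣ) (hlam : lam ≠ 1) (n : ℕ) (hn : 1 ≤ n)
    (u : Fin n → (Fbar p)ˣ) (hu : Function.Injective u) :
    {x : Fin n → (Fbar p)ˣ |
      (∀ i j, (x i : Fbar p) + (u j : Fbar p) ≠ 0) ∧
      (Matrix.of fun i j : Fin n =>
        lamExt p k lam ((x i : Fbar p) + (u j : Fbar p))).det ≠ 0}.Infinite := by
  set χ : MulChar (Fbar p) k := MulChar.ofUnitHom lam
  have hχ : χ ≠ 1 := by
    obtain ⟨a, ha⟩ := DFunLike.ne_iff.1 hlam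
    refine MulChar.ne_one_iff.2 ⟨a, ?_⟩
    rw [MulChar.ofUnitHom_coe]
    exact fun h => ha (Units.ext h)
  have hlamExt : lamExt p k lam = χ := funext fun y => by
    by_cases hy : y = 0
    · rw [hy, χ.map_zero]
      exact dif_pos rfl
    · simp only [lamExt, dif_neg hy]
      exact (MulChar.ofUnitHom_coe lam (Units.mk0 y hy)).symm
  intro hfin
  -- a good tuple whose first entry differs from that of every tuple in the set is a new member
  have hΩ := ((Set.finite_singleton (0 : Fbar p)).union
    (Set.finite_range fun j => -(u j : Fbar p))).union
    (hfin.image fun x => (x ⟨0, hn⟩ : Fbar p))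
  obtain ⟨x, hxΩ, hdet⟩ :=
    MulChar.exists_det_shift_ne_zero (ZMod p) hχ (Units.val_injective.comp hu) hΩ
  simp only [Set.mem_union, Set.mem_singleton_iff, Set.mem_range, Set.mem_image, not_or,
    not_exists, not_and] at hxΩ
  refine (hxΩ ⟨0, hn⟩).2 (fun i => Units.mk0 (x i) (hxΩ i).1.1)
    ⟨fun i j h => (hxΩ i).1.2 j (eq_neg_of_add_eq_zero_left h).symm, ?_⟩ rfl
  simpa [hlamExt] using hdet
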